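/- arXiv:0903.0784 — 3 statements merged into one kernel-verified Lean document; each statement's English description precedes it below -/
import Mathlib

section
/- For a path graph with L vertices, the Euler characteristic of its independence complex, i.e., Σ_{σ independent} (-1)^{|σ|}, equals 0 if L ≡ 1 (mod 3), and equals (-1)^{⌈L/3⌉} otherwise. -/
/-- The independence complex of the path graph on `L` vertices `0, …, L-1`
(edges `{i, i+1}`): all subsets of the vertex set containing no two consecutive
integers. -/
def pathIndep (L : ℕ) : Finset (Finset ℕ) :=
  (Finset.range L).powerset.filter (fun σ => ∀ i ∈ σ, i + 1 ∉ σ)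

lemma mem_pathIndep {L : ℕ} {σ : Finset ℕ} :
    σ ∈ pathIndep L ↔ σ ⊆ Finset.range L ∧ ∀ i ∈ σ, i + 1 ∉ σ := by
  simp [pathIndep]

lemma pathIndep_filter_not (L : ℕ) :
    (pathIndep (L+2)).filter (fun σ => L+1 ∉ σ) = pathIndep (L+1) := by
  ext σ
  simp only [Finset.mem_filter, mem_pathIndep, Finset.subset_iff, Finset.mem_range]
  constructor
  · rintro ⟨⟨hs, hi⟩, hn⟩
    refine ⟨fun x hx => ?_, hi⟩
    have h1 := hs hx
    have h2 : x ≠ L + 1 := fun h => hn (h ▸ hx)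
    omega
  · rintro ⟨hs, hi⟩
    exact ⟨⟨fun x hx => by have := hs hx; omega, hi⟩, fun h => by have := hs h; omega⟩

lemma pathIndep_filter_mem (L : ℕ) :
    (pathIndep (L+2)).filter (fun σ => L+1 ∈ σ) = (pathIndep L).image (insert (L+1)) := by
  ext σ
  simp only [Finset.mem_filter, mem_pathIndep, Finset.mem_image, Finset.subset_iff,
    Finset.mem_range]
  constructor
  · rintro ⟨⟨hs, hi⟩, hm⟩
    refine ⟨σ.erase (L+1), ⟨fun x hx => ?_, fun i hiσ => ?_⟩, Finset.insert_erase hm⟩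
    · have hxσ := Finset.mem_of_mem_erase hx
      have hne := Finset.ne_of_mem_erase hx
      have h1 := hs hxσ
      have h2 : x ≠ L := by
        intro h
        exact hi L (h ▸ hxσ) hm
      omega
    · intro hcon
      exact hi i (Finset.mem_of_mem_erase hiσ) (Finset.mem_of_mem_erase hcon)
  · rintro ⟨τ, ⟨hs, hi⟩, rfl⟩
    refine ⟨⟨fun x hx => ?_, fun i hiτ hcon => ?_⟩, Finset.mem_insert_self _ _⟩
    · rcases Finset.mem_insert.mp hx with h | h
      · omega
      · have := hs h; omega
    · rcases Finset.mem_insert.mp hiτ with h | h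
      · subst h
        rcases Finset.mem_insert.mp hcon with h2 | h2
        · omega
        · have := hs h2; omega
      · rcases Finset.mem_insert.mp hcon with h2 | h2
        · have := hs h; omega
        · exact hi i h h2

lemma pathIndep_rec (L : ℕ) :
    (∑ σ ∈ pathIndep (L+2), (-1 : ℤ) ^ σ.card) =
      (∑ σ ∈ pathIndep (L+1), (-1 : ℤ) ^ σ.card)
        - (∑ σ ∈ pathIndep L, (-1 : ℤ) ^ σ.card) := by
  have hsplit := Finset.sum_filter_add_sum_filter_not (pathIndep (L+2))
    (fun σ => L+1 ∈ σ) (fun σ => (-1 : ℤ) ^ σ.card)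
  have h1 : (∑ σ ∈ (pathIndep (L+2)).filter (fun σ => L+1 ∉ σ), (-1 : ℤ) ^ σ.card)
      = ∑ σ ∈ pathIndep (L+1), (-1 : ℤ) ^ σ.card := by
    rw [pathIndep_filter_not]
  have h2 : (∑ σ ∈ (pathIndep (L+2)).filter (fun σ => L+1 ∈ σ), (-1 : ℤ) ^ σ.card)
      = - ∑ σ ∈ pathIndep L, (-1 : ℤ) ^ σ.card := by
    rw [pathIndep_filter_mem, Finset.sum_image, ← Finset.sum_neg_distrib]
    · refine Finset.sum_congr rfl fun τ hτ => ?_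
      have hτ' := (mem_pathIndep.mp hτ).1
      have hnm : L + 1 ∉ τ := by
        intro h
        have := hτ' h
        simp only [Finset.mem_range] at this
        omega
      rw [Finset.card_insert_of_notMem hnm, pow_succ]
      ring
    · intro τ₁ h₁ τ₂ h₂ h
      have hn1 : L + 1 ∉ τ₁ := by
        intro hh
        have := (mem_pathIndep.mp h₁).1 hh
        simp only [Finset.mem_range] at this; omega
      have hn2 : L + 1 ∉ τ₂ := by
        intro hh
        have := (mem_pathIndep.mp h₂).1 hh
        simp only [Finset.mem_range] at this; omega
      have : (insert (L+1) τ₁).erase (L+1) = (insert (L+1) τ₂).erase (L+1) := by rw [h]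
      rwa [Finset.erase_insert hn1, Finset.erase_insert hn2] at this
  rw [← hsplit, h1, h2]
  ring

/-- The Euler characteristic `Σ_{σ independent} (-1)^{|σ|}` of the independence
complex of the path on `L` vertices vanishes when `L ≡ 1 (mod 3)` and equals
`(-1)^{⌈L/3⌉}` otherwise. -/
theorem path_independence_euler_char (L : ℕ) :
    (∑ σ ∈ pathIndep L, (-1 : ℤ) ^ σ.card) =
      if L % 3 = 1 then 0 else (-1 : ℤ) ^ ((L + 2) / 3) := by
  suffices h : ∀ n : ℕ,
      ((∑ σ ∈ pathIndep n, (-1 : ℤ) ^ σ.card) =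
        if n % 3 = 1 then 0 else (-1 : ℤ) ^ ((n + 2) / 3)) ∧
      ((∑ σ ∈ pathIndep (n+1), (-1 : ℤ) ^ σ.card) =
        if (n+1) % 3 = 1 then 0 else (-1 : ℤ) ^ ((n + 3) / 3)) by
    exact (h L).1
  intro n
  induction n with
  | zero =>
    constructor
    · norm_num
      decide
    · norm_num
      decide
  | succ m ih =>
    refine ⟨ih.2, ?_⟩
    rw [pathIndep_rec, ih.1, ih.2]
    obtain ⟨k, hk⟩ : ∃ k, m = 3*k ∨ m = 3*k+1 ∨ m = 3*k+2 := ⟨m / 3, by omega⟩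
    rcases hk with rfl | rfl | rfl
    · have e1 : (3*k) % 3 = 0 := by omega
      have e2 : (3*k+1) % 3 = 1 := by omega
      have e3 : (3*k+1+1) % 3 = 2 := by omega
      have d1 : (3*k+2) / 3 = k := by omega
      have d3 : (3*k+1+3) / 3 = k + 1 := by omega
      rw [e1, e2, e3, d1, d3]
      norm_num [pow_succ]
    · have e1 : (3*k+1) % 3 = 1 := by omega
      have e2 : (3*k+1+1) % 3 = 2 := by omega
      have e3 : (3*k+1+1+1) % 3 = 0 := by omega
      have d2 : (3*k+1+3) / 3 = k + 1 := by omega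
      have d3 : (3*k+1+1+3) / 3 = k + 1 := by omega
      rw [e1, e2, e3, d2, d3]
      norm_num
    · have e1 : (3*k+2) % 3 = 2 := by omega
      have e2 : (3*k+2+1) % 3 = 0 := by omega
      have e3 : (3*k+2+1+1) % 3 = 1 := by omega
      have d1 : (3*k+2+2) / 3 = k + 1 := by omega
      have d2 : (3*k+2+3) / 3 = k + 1 := by omega
      rw [e1, e2, e3, d1, d2]
      norm_num
end

section
/- For a cycle graph with L ≥ 3 vertices, the sum over independent sets σ of (-1)^{|σ|} equals 2(-1)^j when L=3j, and (-1)^j when L=3j±1. -/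
open Finset
/-- The independence complex of the cycle graph on `L` vertices `0, …, L-1`
(edges `{i, (i+1) mod L}`): all subsets with no two cyclically adjacent
elements. -/
def cycleIndep (L : ℕ) : Finset (Finset ℕ) :=
  (Finset.range L).powerset.filter (fun σ => ∀ i ∈ σ, (i + 1) % L ∉ σ)

def pIndep (s : Finset ℕ) : Finset (Finset ℕ) :=
  s.powerset.filter (fun σ => ∀ i ∈ σ, i + 1 ∉ σ)

def pZ (n : ℕ) : ℤ := ∑ σ ∈ pIndep (Finset.range n), (-1 : ℤ) ^ σ.card

-- shift lemma
lemma shift_sum (a n : ℕ) :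
    ∑ σ ∈ pIndep (Finset.Ico a (a + n)), (-1 : ℤ) ^ σ.card = pZ n := by
  unfold pZ pIndep
  refine Finset.sum_bij' (fun σ _ => σ.image (· - a)) (fun τ _ => τ.image (· + a))
    ?_ ?_ ?_ ?_ ?_
  · intro σ hσ
    simp only [mem_filter, mem_powerset] at hσ ⊢
    obtain ⟨hsub, hadj⟩ := hσ
    constructor
    · intro x hx
      simp only [mem_image] at hx
      obtain ⟨y, hy, rfl⟩ := hx
      have := hsub hy
      simp only [mem_Ico] at this
      simp only [mem_range]
      omega
    · intro x hx hx1
      simp only [mem_image] at hx hx1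
      obtain ⟨y, hy, rfl⟩ := hx
      obtain ⟨z, hz, hz1⟩ := hx1
      have hya := (mem_Ico.mp (hsub hy)).1
      have hza := (mem_Ico.mp (hsub hz)).1
      have : z = y + 1 := by omega
      exact hadj y hy (this ▸ hz)
  · intro τ hτ
    simp only [mem_filter, mem_powerset] at hτ ⊢
    obtain ⟨hsub, hadj⟩ := hτ
    constructor
    · intro x hx
      simp only [mem_image] at hx
      obtain ⟨y, hy, rfl⟩ := hx
      have := mem_range.mp (hsub hy)
      simp only [mem_Ico]; omega
    · intro x hx hx1
      simp only [mem_image] at hx hx1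
      obtain ⟨y, hy, rfl⟩ := hx
      obtain ⟨z, hz, hz1⟩ := hx1
      have : z = y + 1 := by omega
      exact hadj y hy (this ▸ hz)
  · intro σ hσ
    simp only [mem_filter, mem_powerset] at hσ
    ext x
    simp only [mem_image]
    constructor
    · rintro ⟨y, ⟨z, hz, rfl⟩, rfl⟩
      have := (mem_Ico.mp (hσ.1 hz)).1
      rwa [Nat.sub_add_cancel this]
    · intro hx
      have := (mem_Ico.mp (hσ.1 hx)).1
      exact ⟨x - a, ⟨x, hx, rfl⟩, by omega⟩
  · intro τ hτ
    ext x
    simp only [mem_image]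
    constructor
    · rintro ⟨y, ⟨z, hz, rfl⟩, rfl⟩
      simpa using hz
    · intro hx
      exact ⟨x + a, ⟨x, hx, rfl⟩, by omega⟩
  · intro σ hσ
    simp only [mem_filter, mem_powerset] at hσ
    congr 1
    rw [Finset.card_image_of_injOn]
    intro x hx y hy hxy
    have h1 := (mem_Ico.mp (hσ.1 hx)).1
    have h2 := (mem_Ico.mp (hσ.1 hy)).1
    simp only at hxy
    omega
lemma pZ_zero : pZ 0 = 1 := by decide
lemma pZ_one : pZ 1 = 0 := by decide
lemma pZ_two : pZ 2 = -1 := by decide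

lemma pZ_rec (n : ℕ) : pZ (n + 2) = pZ (n + 1) - pZ n := by
  have hsplit := Finset.sum_filter_add_sum_filter_not (pIndep (range (n+2)))
    (fun σ => (n+1) ∈ σ) (fun σ => (-1:ℤ)^σ.card)
  have h1 : (pIndep (range (n+2))).filter (fun σ => ¬ (n+1) ∈ σ)
      = pIndep (range (n+1)) := by
    ext σ
    simp only [pIndep, mem_filter, mem_powerset, subset_iff, mem_range]
    constructor
    · rintro ⟨⟨hsub, hadj⟩, hmem⟩
      refine ⟨fun {x} hx => ?_, hadj⟩
      have := hsub hx
      have : x ≠ n + 1 := fun h => hmem (h ▸ hx)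
      omega
    · rintro ⟨hsub, hadj⟩
      refine ⟨⟨fun {x} hx => by have := hsub hx; omega, hadj⟩, fun h => by
        have := hsub h; omega⟩
  have h2 : ∑ σ ∈ (pIndep (range (n+2))).filter (fun σ => (n+1) ∈ σ),
      (-1:ℤ)^σ.card = ∑ τ ∈ pIndep (range n), -(-1:ℤ)^τ.card := by
    refine Finset.sum_bij' (fun σ _ => σ.erase (n+1)) (fun τ _ => insert (n+1) τ)
      ?_ ?_ ?_ ?_ ?_
    · intro σ hσ
      simp only [pIndep, mem_filter, mem_powerset, subset_iff, mem_range] at hσ ⊢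
      obtain ⟨⟨hsub, hadj⟩, hmem⟩ := hσ
      constructor
      · intro x hx
        rw [mem_erase] at hx
        obtain ⟨hne, hxσ⟩ := hx
        have h3 := hsub hxσ
        have : x ≠ n := by
          rintro rfl
          exact hadj x hxσ hmem
        omega
      · intro x hx
        rw [mem_erase] at hx
        exact fun h => hadj x hx.2 (mem_erase.mp h).2
    · intro τ hτ
      simp only [pIndep, mem_filter, mem_powerset, subset_iff, mem_range] at hτ ⊢
      obtain ⟨hsub, hadj⟩ := hτ
      refine ⟨⟨fun {x} hx => ?_, fun x hx => ?_⟩, mem_insert_self _ _⟩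
      · rw [mem_insert] at hx
        rcases hx with rfl | hx
        · omega
        · have := hsub hx; omega
      · rw [mem_insert] at hx
        intro hcon
        rw [mem_insert] at hcon
        rcases hx with rfl | hx
        · rcases hcon with h | h
          · omega
          · have := hsub h; omega
        · rcases hcon with h | h
          · have := hsub hx; omega
          · exact hadj x hx h
    · intro σ hσ
      simp only [pIndep, mem_filter] at hσ
      exact insert_erase hσ.2
    · intro τ hτ
      simp only [pIndep, mem_filter, mem_powerset, subset_iff, mem_range] at hτ
      refine erase_insert (fun h => ?_)
      have := hτ.1 h; omega
    · intro σ hσ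
      simp only [pIndep, mem_filter] at hσ
      have : σ.card = (σ.erase (n+1)).card + 1 := by
        rw [card_erase_of_mem hσ.2]
        have : 0 < σ.card := card_pos.mpr ⟨n+1, hσ.2⟩
        omega
      rw [this, pow_succ]
      ring
  rw [Finset.sum_neg_distrib] at h2
  show (∑ σ ∈ pIndep (range (n+2)), (-1:ℤ)^σ.card) = _
  rw [← hsplit, h1, h2]
  show -pZ n + pZ (n+1) = pZ (n+1) - pZ n
  ring
lemma cycle_sum_eq (L : ℕ) (hL : 3 ≤ L) :
    ∑ σ ∈ cycleIndep L, (-1 : ℤ) ^ σ.card = pZ (L - 1) - pZ (L - 3) := by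
  have hsplit := Finset.sum_filter_add_sum_filter_not (cycleIndep L)
    (fun σ => (0:ℕ) ∈ σ) (fun σ => (-1:ℤ)^σ.card)
  have h1 : (cycleIndep L).filter (fun σ => ¬ (0:ℕ) ∈ σ)
      = pIndep (Finset.Ico 1 L) := by
    ext σ
    simp only [cycleIndep, pIndep, mem_filter, mem_powerset, subset_iff, mem_range, mem_Ico]
    constructor
    · rintro ⟨⟨hsub, hadj⟩, hmem⟩
      refine ⟨fun {x} hx => ?_, fun x hx hcon => ?_⟩
      · have := hsub hx
        have : x ≠ 0 := fun h => hmem (h ▸ hx)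
        omega
      · have hxL := hsub hcon
        have hm : (x + 1) % L = x + 1 := Nat.mod_eq_of_lt hxL
        exact hadj x hx (by rw [hm]; exact hcon)
    · rintro ⟨hsub, hadj⟩
      have h0 : (0:ℕ) ∉ σ := fun h => by have := hsub h; omega
      refine ⟨⟨fun {x} hx => (hsub hx).2, fun x hx => ?_⟩, h0⟩
      have hxL := (hsub hx).2
      rcases Nat.lt_or_ge (x+1) L with h | h
      · rw [Nat.mod_eq_of_lt h]
        exact hadj x hx
      · have : x + 1 = L := by omega
        rw [this, Nat.mod_self]
        exact h0
  have h2 : ∑ σ ∈ (cycleIndep L).filter (fun σ => (0:ℕ) ∈ σ),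
      (-1:ℤ)^σ.card = ∑ τ ∈ pIndep (Finset.Ico 2 (L-1)), -(-1:ℤ)^τ.card := by
    refine Finset.sum_bij' (fun σ _ => σ.erase 0) (fun τ _ => insert 0 τ)
      ?_ ?_ ?_ ?_ ?_
    · intro σ hσ
      simp only [cycleIndep, pIndep, mem_filter, mem_powerset, subset_iff,
        mem_range, mem_Ico] at hσ ⊢
      obtain ⟨⟨hsub, hadj⟩, hmem⟩ := hσ
      have h1L : (1:ℕ) ∉ σ := by
        have := hadj 0 hmem
        rwa [Nat.mod_eq_of_lt (by omega)] at this
      constructor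
      · intro x hx
        rw [mem_erase] at hx
        obtain ⟨hne, hxσ⟩ := hx
        have hxL := hsub hxσ
        have hx1 : x ≠ 1 := fun h => h1L (h ▸ hxσ)
        have hxL1 : x ≠ L - 1 := by
          rintro rfl
          have : (L - 1 + 1) % L = 0 := by
            have : L - 1 + 1 = L := by omega
            rw [this, Nat.mod_self]
          exact hadj _ hxσ (this ▸ hmem)
        omega
      · intro x hx hcon
        rw [mem_erase] at hx hcon
        have hxL : x + 1 < L := by
          have := hsub hcon.2; omega
        exact hadj x hx.2 (by rw [Nat.mod_eq_of_lt hxL]; exact hcon.2)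
    · intro τ hτ
      simp only [cycleIndep, pIndep, mem_filter, mem_powerset, subset_iff,
        mem_range, mem_Ico] at hτ ⊢
      obtain ⟨hsub, hadj⟩ := hτ
      refine ⟨⟨fun {x} hx => ?_, fun x hx => ?_⟩, mem_insert_self _ _⟩
      · rw [mem_insert] at hx
        rcases hx with rfl | hx
        · omega
        · have := hsub hx; omega
      · rw [mem_insert] at hx
        intro hcon
        rcases hx with rfl | hx
        · rw [Nat.mod_eq_of_lt (show 0 + 1 < L by omega)] at hcon
          rw [mem_insert] at hcon
          rcases hcon with h | h
          · omega
          · have := hsub h; omega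
        · have hxb := hsub hx
          rw [Nat.mod_eq_of_lt (show x + 1 < L by omega)] at hcon
          rw [mem_insert] at hcon
          rcases hcon with h | h
          · omega
          · exact hadj x hx h
    · intro σ hσ
      simp only [cycleIndep, mem_filter] at hσ
      exact insert_erase hσ.2
    · intro τ hτ
      simp only [pIndep, mem_filter, mem_powerset, subset_iff, mem_Ico] at hτ
      refine erase_insert (fun h => ?_)
      have := hτ.1 h; omega
    · intro σ hσ
      simp only [cycleIndep, mem_filter] at hσ
      have : σ.card = (σ.erase 0).card + 1 := by
        rw [card_erase_of_mem hσ.2]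
        have : 0 < σ.card := card_pos.mpr ⟨0, hσ.2⟩
        omega
      rw [this, pow_succ]
      ring
  rw [Finset.sum_neg_distrib] at h2
  have hA : ∑ σ ∈ pIndep (Finset.Ico 1 L), (-1:ℤ)^σ.card = pZ (L-1) := by
    have h := shift_sum 1 (L-1)
    rwa [show 1 + (L-1) = L by omega] at h
  have hB : ∑ σ ∈ pIndep (Finset.Ico 2 (L-1)), (-1:ℤ)^σ.card = pZ (L-3) := by
    have h : L - 1 = 2 + (L - 3) := by omega
    rw [h]
    exact shift_sum 2 (L-3)
  calc ∑ σ ∈ cycleIndep L, (-1:ℤ)^σ.card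
      = _ := (hsplit).symm
    _ = pZ (L-1) - pZ (L-3) := by rw [h1, h2, hA, hB]; ring

lemma pZ_add_three (n : ℕ) : pZ (n + 3) = -pZ n := by
  have h1 : pZ (n + 3) = pZ (n + 2) - pZ (n + 1) := pZ_rec (n + 1)
  have h2 := pZ_rec n
  linarith

lemma pZ_period (k r : ℕ) : pZ (3 * k + r) = (-1) ^ k * pZ r := by
  induction k with
  | zero => simp
  | succ k ih =>
    have h : 3 * (k + 1) + r = (3 * k + r) + 3 := by ring
    rw [h, pZ_add_three, ih, pow_succ]
    ring

/-- For the cycle graph on `L ≥ 3` vertices, the sum `Σ_{σ independent} (-1)^{|σ|}`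
equals `2(-1)^j` when `L = 3j`, and `(-1)^j` when `L = 3j + 1` or `L = 3j - 1`. -/
theorem cycle_independence_euler_char (L j : ℕ) (hL : 3 ≤ L) :
    (L = 3 * j → (∑ σ ∈ cycleIndep L, (-1 : ℤ) ^ σ.card) = 2 * (-1) ^ j) ∧
    (L = 3 * j + 1 → (∑ σ ∈ cycleIndep L, (-1 : ℤ) ^ σ.card) = (-1) ^ j) ∧
    (L + 1 = 3 * j → (∑ σ ∈ cycleIndep L, (-1 : ℤ) ^ σ.card) = (-1) ^ j) := by
  refine ⟨?_, ?_, ?_⟩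
  · intro h
    have hj : 1 ≤ j := by omega
    set m := j - 1 with hm
    rw [cycle_sum_eq L hL, show L - 1 = 3 * m + 2 by omega,
      show L - 3 = 3 * m + 0 by omega, pZ_period, pZ_period, pZ_two,
      show (0:ℕ) = 0 by rfl, pZ_zero, show j = m + 1 by omega, pow_succ]
    ring
  · intro h
    have hj : 1 ≤ j := by omega
    set m := j - 1 with hm
    rw [cycle_sum_eq L hL, show L - 1 = 3 * j + 0 by omega,
      show L - 3 = 3 * m + 1 by omega, pZ_period, pZ_period, pZ_zero, pZ_one]
    ring
  · intro h
    have hj : 2 ≤ j := by omega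
    set m := j - 2 with hm
    rw [cycle_sum_eq L hL, show L - 1 = 3 * (m + 1) + 1 by omega,
      show L - 3 = 3 * m + 2 by omega, pZ_period, pZ_period, pZ_one, pZ_two,
      show j = m + 2 by omega]
    ring
end

section
/- For any natural numbers r, s with r + s ≥ 2 and any residue c, the following binomial recursion holds: Σ_{l≥0} C(r+s, c+3l) = 2^{r+s-2} + Σ_{l≥0} C(r+s-2, c+3l-1), where binomial coefficients with negative or out-of-range lower index are zero. -/
/-!
Write `T_n(j)` for the sum of `C(n, k)` over `k ≡ j (mod 3)`. Pascal's rule gives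
`T_{n+1}(j) = T_n(j) + T_n(j - 1)`, hence `T_{n+2}(c) = T_n(c) + 2 T_n(c - 1) + T_n(c - 2)`, and the
three residue classes together give `T_n(c) + T_n(c - 1) + T_n(c - 2) = 2^n`, so
`T_{n+2}(c) = 2^n + T_n(c - 1)`. For `c ≤ 2` the indices `c + 3l` run through the residue class of `c`
exactly once, so both sides of the identity are such residue sums.
-/

open Finset

section

variable {M : Type*} [AddCommMonoid M] {m : ℕ}

theorem sum_range_succ'_filter_natCast_eq (g : ℕ → M) (N : ℕ) (j : ZMod m) :
    ∑ k ∈ range (N + 1) with ((k : ℕ) : ZMod m) = j, g k =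
      ∑ k ∈ range N with ((k : ℕ) : ZMod m) = j - 1, g (k + 1) +
        if (0 : ZMod m) = j then g 0 else 0 := by
  simp only [sum_filter, sum_range_succ' _ N, Nat.cast_succ, Nat.cast_zero, eq_sub_iff_add_eq]

theorem sum_range_mul_filter_natCast_eq (f : ℕ → M) (N : ℕ) {c : ℕ} (hc : c < m) :
    ∑ k ∈ range (m * N) with ((k : ℕ) : ZMod m) = c, f k = ∑ l ∈ range N, f (c + m * l) := by
  have hm : 0 < m := by omega
  have hinj : Set.InjOn (fun l => c + m * l) (range N) := fun a _ b _ hab => by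
    simpa [hm.ne'] using hab
  rw [← sum_image hinj]
  congr 1
  ext k
  simp only [mem_filter, mem_range, mem_image, ZMod.natCast_eq_natCast_iff', Nat.mod_eq_of_lt hc]
  constructor
  · rintro ⟨hk, hkc⟩
    refine ⟨k / m, (Nat.div_lt_iff_lt_mul hm).2 (by rwa [mul_comm]), ?_⟩
    rw [← hkc, Nat.mod_add_div]
  · rintro ⟨l, hl, rfl⟩
    refine ⟨by nlinarith, by simp [Nat.mod_eq_of_lt hc]⟩

end

theorem ZMod.sum_univ_three_sub {M : Type*} [AddCommMonoid M] (F : ZMod 3 → M) (c : ZMod 3) :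
    ∑ j, F j = F c + F (c - 1) + F (c - 2) := by
  have huniv : (univ : Finset (ZMod 3)) = {c, c - 1, c - 2} := by revert c; decide
  rw [huniv, sum_insert (by revert c; decide), sum_pair (by revert c; decide), add_assoc]

def residueChooseSum (m n : ℕ) (j : ZMod m) : ℕ :=
  ∑ k ∈ range (n + 1) with ((k : ℕ) : ZMod m) = j, n.choose k

namespace residueChooseSum

variable {m : ℕ}

theorem eq_sum_range {n N : ℕ} (hN : n < N) (j : ZMod m) :
    residueChooseSum m n j = ∑ k ∈ range N with ((k : ℕ) : ZMod m) = j, n.choose k := by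
  refine sum_subset (filter_subset_filter _ (range_subset_range.2 hN)) fun k hk hk' => ?_
  simp only [mem_filter, mem_range, not_and] at hk hk'
  exact Nat.choose_eq_zero_of_lt (not_le.1 fun hkn => hk' (Nat.lt_succ_of_le hkn) hk.2)

theorem succ (n : ℕ) (j : ZMod m) :
    residueChooseSum m (n + 1) j = residueChooseSum m n j + residueChooseSum m n (j - 1) := by
  have pascal := sum_range_succ'_filter_natCast_eq (m := m) (n + 1).choose (n + 1) j
  have shift := sum_range_succ'_filter_natCast_eq (m := m) n.choose (n + 1) j
  simp only [Nat.choose_succ_succ', sum_add_distrib, Nat.choose_zero_right] at pascal shift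
  rw [residueChooseSum, pascal, eq_sum_range (by omega : n < n + 1 + 1) j, shift, residueChooseSum]
  ring

theorem sum_univ [NeZero m] (n : ℕ) : ∑ j, residueChooseSum m n j = 2 ^ n := by
  simp only [residueChooseSum, sum_fiberwise, Nat.sum_range_choose]

theorem three_add_two (n : ℕ) (j : ZMod 3) :
    residueChooseSum 3 (n + 2) j = 2 ^ n + residueChooseSum 3 n (j - 1) := by
  rw [← sum_univ (m := 3) n, ZMod.sum_univ_three_sub _ j, succ, succ, succ, sub_sub,
    one_add_one_eq_two]
  ring

theorem eq_sum_range_choose_add_mul {n c N : ℕ} (hc : c < m) (hN : n < m * N) :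
    residueChooseSum m n c = ∑ l ∈ range N, n.choose (c + m * l) := by
  rw [← sum_range_mul_filter_natCast_eq _ _ hc, eq_sum_range hN]

theorem sub_one_eq_sum_range_choose_add_mul_sub_one {n c N : ℕ} (hc : c < m)
    (hN : n + 1 < m * N) :
    residueChooseSum m n (c - 1) =
      ∑ l ∈ range N, if c + m * l = 0 then 0 else n.choose (c + m * l - 1) := by
  obtain ⟨K, hK⟩ : ∃ K, m * N = K + 1 := ⟨m * N - 1, by omega⟩
  rw [← sum_range_mul_filter_natCast_eq (fun k => if k = 0 then 0 else n.choose (k - 1)) _ hc,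
    hK, sum_range_succ'_filter_natCast_eq, eq_sum_range (N := K) (by omega)]
  simp

end residueChooseSum

/-- Binomial recursion used in the computation of the anomalous tiling count:
for `r + s ≥ 2` and a residue `c ∈ {0,1,2}`,
`Σ_{l≥0} C(r+s, c+3l) = 2^{r+s-2} + Σ_{l≥0} C(r+s-2, c+3l-1)`,
where binomial coefficients with negative lower index are zero
(the `l = 0`, `c = 0` term of the right-hand sum is guarded). -/
theorem binomial_mod_three_recursion (r s c : ℕ) (h : 2 ≤ r + s) (hc : c ≤ 2) :
    (∑ l ∈ Finset.range (r + s + 1), (r + s).choose (c + 3 * l)) =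
      2 ^ (r + s - 2) +
        ∑ l ∈ Finset.range (r + s + 1),
          (if c + 3 * l = 0 then 0 else (r + s - 2).choose (c + 3 * l - 1)) := by
  obtain ⟨n, hn⟩ : ∃ n, r + s = n + 2 := ⟨r + s - 2, by omega⟩
  rw [hn, Nat.add_sub_cancel,
    ← residueChooseSum.eq_sum_range_choose_add_mul (by omega) (by omega),
    ← residueChooseSum.sub_one_eq_sum_range_choose_add_mul_sub_one (by omega) (by omega)]
  exact residueChooseSum.three_add_two n c
end
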